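/- For t ∈ ℝ \ ℤ_{≥0} and λ ∈ ℝ, the t-deformed cumulant transform of the t-deformed binomial series B_λ^{(t)}(z) := (1−λz)^t = 1 + Σ_{k≥1} (−1)^k ((t)_k/k!) λ^k z^k satisfies C^t[B_λ^{(t)}](z) = λz; equivalently, κ_1^t(B_λ^{(t)}) = λ and κ_n^t(B_λ^{(t)}) = 0 for all n ≥ 2. -/

import Mathlib

open PowerSeries Finset

/-- Falling factorial `(t)_k = t (t-1) ⋯ (t-k+1)`. -/
noncomputable def ffall (t : ℝ) (k : ℕ) : ℝ := ∏ i ∈ Finset.range k, (t - i)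

/-- The `t`-deformed convolution of formal power series. -/
noncomputable def tconv (t : ℝ) (A B : PowerSeries ℝ) : PowerSeries ℝ :=
  PowerSeries.mk fun k => ∑ p ∈ Finset.HasAntidiagonal.antidiagonal k,
    ffall t k / (ffall t p.1 * ffall t p.2)
      * (PowerSeries.coeff p.1 A) * (PowerSeries.coeff p.2 B)

/-- Formal logarithm of a power series (with constant term 1):
`log A = - Σ_{k ≥ 1} (1 - A)^k / k`. -/
noncomputable def flog (A : PowerSeries ℝ) : PowerSeries ℝ :=
  PowerSeries.mk fun n =>
    -∑ k ∈ Finset.range (n + 1), (PowerSeries.coeff (R := ℝ) n ((1 - A) ^ k)) / k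

/-- Power sums of `A ∈ 1 + zℝ⟦z⟧`, defined by `Σ p_k(A) z^k = -z (d/dz) log A(z)`. -/
noncomputable def powSum (A : PowerSeries ℝ) (k : ℕ) : ℝ :=
  -(k : ℝ) * PowerSeries.coeff k (flog A)

/-- `E^t[A](z) = Σ_k (t^k/(t)_k) a_k z^k`. -/
noncomputable def Et (t : ℝ) (A : PowerSeries ℝ) : PowerSeries ℝ :=
  PowerSeries.mk fun k => t ^ k / ffall t k * PowerSeries.coeff k A

/-- The `t`-deformed cumulant transform `C^t[A](z) = -(z/t)(d/dz) log(E^t[A](z))`. -/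
noncomputable def Ct (t : ℝ) (A : PowerSeries ℝ) : PowerSeries ℝ :=
  PowerSeries.mk fun n => -(1 / t) * ((n : ℝ) * PowerSeries.coeff n (flog (Et t A)))

/-- The `i`-th `t`-deformed cumulant of `A`. -/
noncomputable def kappa (t : ℝ) (A : PowerSeries ℝ) (i : ℕ) : ℝ :=
  PowerSeries.coeff i (Ct t A)

/-- The `t`-deformed binomial series `B_λ^{(t)}(z) = (1-λz)^t
= 1 + Σ_{k≥1} (-1)^k ((t)_k/k!) λ^k z^k`. -/
noncomputable def Bt (t lam : ℝ) : PowerSeries ℝ :=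
  PowerSeries.mk fun k => (-1) ^ k * ffall t k / (k.factorial : ℝ) * lam ^ k

/-! The falling factorials cancel, so `E^t[B_λ^{(t)}] = exp(-tλz)`, and everything reduces to
`log exp(cz) = cz`, i.e. to `(log A)' · A = A'` for the truncated-series logarithm. For the partial
sums `S_N = ∑_{k=1}^N (1 - A)^k / k` the geometric sum gives `S_N' · A = -A' · (1 - (1 - A)^N)`;
since `log A + S_N` and `(1 - A)^N` are both divisible by `X^N`, the difference `(log A)' · A - A'`
is divisible by every power of `X`. -/

lemma ffall_ne_zero {t : ℝ} (ht : ∀ n : ℕ, t ≠ n) (k : ℕ) : ffall t k ≠ 0 :=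
  prod_ne_zero_iff.2 fun i _ => sub_ne_zero.2 (ht i)

lemma Et_Bt {t : ℝ} (ht : ∀ n : ℕ, t ≠ n) (lam : ℝ) :
    Et t (Bt t lam) = rescale (-(t * lam)) (exp ℝ) := by
  ext k
  have hF := ffall_ne_zero ht k
  rw [Et, Bt, coeff_mk, coeff_mk, coeff_rescale, coeff_exp, neg_pow (t * lam), mul_pow]
  simp only [one_div, map_inv₀, map_natCast]
  field_simp

lemma X_pow_dvd_derivative {R : Type*} [CommSemiring R] {f : R⟦X⟧} {N : ℕ}
    (h : X ^ (N + 1) ∣ f) : X ^ N ∣ d⁄dX R f := by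
  rw [X_pow_dvd_iff] at h ⊢
  intro m hm
  rw [coeff_derivative, h (m + 1) (by omega), zero_mul]

lemma derivative_rescale {R : Type*} [CommSemiring R] (c : R) (f : R⟦X⟧) :
    d⁄dX R (rescale c f) = C c * rescale c (d⁄dX R f) := by
  ext n
  rw [coeff_derivative, coeff_C_mul, coeff_rescale, coeff_rescale, coeff_derivative, pow_succ]
  ring

lemma coeff_pow_eq_zero_of_lt {R : Type*} [CommSemiring R] {u : R⟦X⟧}
    (hu : X ∣ u) {j k : ℕ} (h : j < k) : coeff j (u ^ k) = 0 :=
  X_pow_dvd_iff.1 (pow_dvd_pow_of_dvd hu k) j h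

lemma X_dvd_one_sub {R : Type*} [CommRing R] {A : R⟦X⟧} (hA : constantCoeff A = 1) :
    X ∣ 1 - A :=
  X_dvd_iff.2 (by rw [map_sub, map_one, hA, sub_self])

noncomputable def logPartialSum (A : ℝ⟦X⟧) (N : ℕ) : ℝ⟦X⟧ :=
  ∑ k ∈ range N, C ((k + 1 : ℝ)⁻¹) * (1 - A) ^ (k + 1)

section flog

variable {A : ℝ⟦X⟧}

lemma X_pow_dvd_flog_add_logPartialSum (hA : constantCoeff A = 1) (N : ℕ) :
    X ^ (N + 1) ∣ flog A + logPartialSum A N := by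
  rw [X_pow_dvd_iff]
  intro j hj
  have htail : ∑ k ∈ Ico j N, (k + 1 : ℝ)⁻¹ * coeff j ((1 - A) ^ (k + 1)) = 0 :=
    sum_eq_zero fun k hk => by
      rw [coeff_pow_eq_zero_of_lt (X_dvd_one_sub hA) (by rw [mem_Ico] at hk; omega), mul_zero]
  rw [map_add, flog, logPartialSum, coeff_mk, map_sum, sum_range_succ']
  simp only [coeff_C_mul]
  rw [← sum_range_add_sum_Ico _ (Nat.lt_succ_iff.1 hj), htail]
  simp [div_eq_inv_mul]

lemma derivative_logPartialSum_mul (N : ℕ) :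
    d⁄dX ℝ (logPartialSum A N) * A = -d⁄dX ℝ A * (1 - (1 - A) ^ N) := by
  have hterm : ∀ k : ℕ, d⁄dX ℝ (C ((k + 1 : ℝ)⁻¹) * (1 - A) ^ (k + 1)) =
      (1 - A) ^ k * -d⁄dX ℝ A := fun k => by
    rw [Derivation.leibniz, derivative_C, smul_zero, add_zero, derivative_pow, smul_eq_mul,
      Nat.add_sub_cancel, map_sub, derivative_one, zero_sub, ← map_natCast C, ← mul_assoc,
      ← mul_assoc, ← map_mul, Nat.cast_succ, inv_mul_cancel₀ (Nat.cast_add_one_ne_zero k),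
      map_one, one_mul]
  have hgeom := mul_neg_geom_sum (1 - A) N
  rw [sub_sub_cancel] at hgeom
  rw [logPartialSum, map_sum, sum_congr rfl fun k _ => hterm k, ← sum_mul, ← hgeom]
  ring

theorem derivative_flog_mul (hA : constantCoeff A = 1) :
    d⁄dX ℝ (flog A) * A = d⁄dX ℝ A := by
  have hX : ∀ N, X ^ N ∣ d⁄dX ℝ (flog A) * A - d⁄dX ℝ A := fun N => by
    have hsplit : d⁄dX ℝ (flog A) * A - d⁄dX ℝ A =
        d⁄dX ℝ (flog A + logPartialSum A N) * A - d⁄dX ℝ A * (1 - A) ^ N := by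
      rw [map_add, add_mul, derivative_logPartialSum_mul]
      ring
    rw [hsplit]
    exact dvd_sub (dvd_mul_of_dvd_left (X_pow_dvd_derivative
      (X_pow_dvd_flog_add_logPartialSum hA N)) _) (dvd_mul_of_dvd_right
      (pow_dvd_pow_of_dvd (X_dvd_one_sub hA) N) _)
  rw [← sub_eq_zero]
  ext m
  rw [map_zero]
  exact X_pow_dvd_iff.1 (hX (m + 1)) m (Nat.lt_succ_self m)

end flog

lemma derivative_flog_rescale_exp (c : ℝ) : d⁄dX ℝ (flog (rescale c (exp ℝ))) = C c := by
  have hE : constantCoeff (rescale c (exp ℝ)) = 1 := by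
    rw [← coeff_zero_eq_constantCoeff_apply, coeff_rescale, pow_zero, one_mul,
      coeff_zero_eq_constantCoeff_apply, constantCoeff_exp]
  have hE0 : rescale c (exp ℝ) ≠ 0 := fun h => by simp [h] at hE
  refine mul_right_cancel₀ hE0 ?_
  rw [derivative_flog_mul hE, derivative_rescale, derivative_exp]

lemma Ct_eq_C_mul_X_mul_derivative_flog (t : ℝ) (A : ℝ⟦X⟧) :
    Ct t A = C (-(1 / t)) * (X * d⁄dX ℝ (flog (Et t A))) := by
  ext n
  rw [Ct, coeff_mk, coeff_C_mul]
  rcases n with _ | n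
  · simp
  · rw [coeff_succ_X_mul, coeff_derivative]
    push_cast
    ring

/-- `C^t[B_λ^{(t)}](z) = λz`; equivalently `κ_1^t(B_λ^{(t)}) = λ` and
`κ_n^t(B_λ^{(t)}) = 0` for all `n ≥ 2`. -/
theorem Ct_Bt (t : ℝ) (ht : ∀ n : ℕ, t ≠ (n : ℝ)) (lam : ℝ) :
    Ct t (Bt t lam) = PowerSeries.C lam * PowerSeries.X ∧
    kappa t (Bt t lam) 1 = lam ∧
    ∀ n : ℕ, 2 ≤ n → kappa t (Bt t lam) n = 0 := by
  have ht0 : t ≠ 0 := by simpa using ht 0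
  have hCt : Ct t (Bt t lam) = C lam * X := by
    rw [Ct_eq_C_mul_X_mul_derivative_flog, Et_Bt ht, derivative_flog_rescale_exp, mul_comm X,
      ← mul_assoc, ← map_mul]
    congr 2
    field_simp
  refine ⟨hCt, ?_, fun n hn => ?_⟩
  · rw [kappa, hCt, coeff_C_mul, coeff_X, if_pos rfl, mul_one]
  · rw [kappa, hCt, coeff_C_mul, coeff_X, if_neg (by omega), mul_zero]
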